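/- Suppose all points of S = R ∪ B ∪ P lie on a common circle with center c, and let G be a minimum red-blue-purple spanning graph of (R,B,P). Let p ∈ P be a purple point and let H be any closed half-plane whose boundary line passes through p and c (so H contains p and its antipodal point on the circle). Then p has at most one purple neighbor in G lying in H. Consequently, p has at most two purple neighbors in G in total. -/

import Mathlib

open scoped Classical

noncomputable section

/-- The Euclidean plane. -/
abbrev Pt : Type := EuclideanSpace ℝ (Fin 2)

/-- The simple graph on the plane whose edge set is the finite set `E`. -/
def graphOf (E : Finset (Sym2 Pt)) : SimpleGraph Pt where
  Adj x y := x ≠ y ∧ s(x, y) ∈ E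
  symm := ⟨fun x y ⟨hne, he⟩ => ⟨hne.symm, by rwa [Sym2.eq_swap]⟩⟩
  loopless := ⟨fun x ⟨hne, _⟩ => hne rfl⟩

/-- Euclidean length of an edge. -/
def edgeLen (e : Sym2 Pt) : ℝ :=
  Sym2.lift ⟨fun x y => dist x y, fun _ _ => dist_comm _ _⟩ e

/-- Total Euclidean length of a finite edge set. -/
def weight (E : Finset (Sym2 Pt)) : ℝ := ∑ e ∈ E, edgeLen e

/-- `E` is the edge set of a red-blue-purple spanning graph of `(R, B, P)`. -/
def IsRBP (R B P : Finset Pt) (E : Finset (Sym2 Pt)) : Prop :=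
  (∀ e ∈ E, ¬ e.IsDiag) ∧
  (∀ e ∈ E, ∀ x ∈ e, x ∈ R ∪ B ∪ P) ∧
  ((graphOf E).induce (↑(R ∪ P) : Set Pt)).Connected ∧
  ((graphOf E).induce (↑(B ∪ P) : Set Pt)).Connected

/-- `E` is the edge set of a minimum red-blue-purple spanning graph of `(R, B, P)`. -/
def IsMinRBP (R B P : Finset Pt) (E : Finset (Sym2 Pt)) : Prop :=
  IsRBP R B P E ∧ ∀ E', IsRBP R B P E' → weight E ≤ weight E'

/-!
Let `q ≠ q'` be purple neighbours of `p` in one closed half-plane bounded by the line `p c`, with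
`|pq'| ≤ |pq|`. Then `q'` lies on the arc from `p` to `q` inside that half-plane, which is at most a
semicircle, so the inscribed angle `p q' q` is at least a right angle and `|qq'| < |pq|`.
Replacing the edge `pq` by `qq'` keeps the red-purple and the blue-purple subgraphs connected
(`p` still reaches `q` through `q'`) and strictly decreases the weight, contradicting minimality.
The two closed half-planes bounded by the line `p c` cover the plane, whence at most two purple
neighbours in total.
-/

open RealInnerProductSpace Module

theorem Module.exists_dual_ne_zero_apply_eq_zero {K V : Type*} [Field K] [AddCommGroup V]
    [Module K V] [FiniteDimensional K V] (h : 1 < finrank K V) (v : V) :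
    ∃ f : Dual K V, f ≠ 0 ∧ f v = 0 := by
  have hlt : K ∙ v < ⊤ := by
    refine lt_top_iff_ne_top.2 fun htop => h.not_ge ?_
    calc finrank K V = finrank K (K ∙ v) := by rw [htop, finrank_top]
      _ ≤ 1 := by simpa using finrank_span_le_card ({v} : Set V)
  obtain ⟨f, hf, hmap⟩ := Submodule.exists_dual_map_eq_bot_of_lt_top hlt inferInstance
  refine ⟨f, hf, ?_⟩
  have hfv := Submodule.mem_map_of_mem (f := f) (Submodule.mem_span_singleton_self v)
  rwa [hmap, Submodule.mem_bot] at hfv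

/-- The obtuse-angle inequality of `Orientation.inner_sub_sub_nonpos` in coordinates: `(a, b)` and
`(c, d)` lie on the circle of radius `R` through `(R, 0)`. -/
theorem add_mul_sub_le_mul_of_sq_add_sq_eq {R a b c d : ℝ} (hR : 0 ≤ R)
    (hab : a ^ 2 + b ^ 2 = R ^ 2) (hcd : c ^ 2 + d ^ 2 = R ^ 2) (hac : a ≤ c) (hbd : 0 ≤ b * d) :
    (R + a) * (R - c) ≤ b * d := by
  have ha : 0 ≤ R + a := by nlinarith
  have hc : 0 ≤ R - c := by nlinarith
  have hsq : ((R + a) * (R - c)) ^ 2 ≤ (b * d) ^ 2 := by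
    have : (b * d) ^ 2 - ((R + a) * (R - c)) ^ 2 = 2 * R * (c - a) * ((R + a) * (R - c)) := by
      linear_combination d ^ 2 * hab + (R ^ 2 - a ^ 2) * hcd
    nlinarith [mul_nonneg (mul_nonneg (mul_nonneg hR (sub_nonneg.2 hac)) ha) hc]
  exact le_of_abs_le (abs_le_of_sq_le_sq hsq hbd)

section InnerProductSpace

variable {E : Type*} [NormedAddCommGroup E] [InnerProductSpace ℝ E]

theorem inner_le_inner_of_norm_sub_le {u v w : E} (hu : ‖u‖ = ‖w‖) (hv : ‖v‖ = ‖w‖)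
    (h : ‖w - v‖ ≤ ‖w - u‖) : ⟪w, u⟫ ≤ ⟪w, v⟫ := by
  have hsq := pow_le_pow_left₀ (norm_nonneg _) h 2
  rw [norm_sub_sq_real, norm_sub_sq_real, hu, hv] at hsq
  linarith

theorem norm_sub_lt_of_inner_sub_sub_nonpos {u v w : E} (h : ⟪w - v, u - v⟫ ≤ 0) (hvw : v ≠ w) :
    ‖u - v‖ < ‖w - u‖ := by
  have hpos : 0 < ‖w - v‖ := norm_pos_iff.2 (sub_ne_zero.2 hvw.symm)
  have hsq : ‖w - u‖ ^ 2 = ‖w - v‖ ^ 2 - 2 * ⟪w - v, u - v⟫ + ‖u - v‖ ^ 2 := by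
    rw [← norm_sub_sq_real, sub_sub_sub_cancel_right]
  exact lt_of_pow_lt_pow_left₀ 2 (norm_nonneg _) (by nlinarith)

variable [Fact (finrank ℝ E = 2)]

namespace Orientation
variable (o : Orientation ℝ E (Fin 2))

theorem sq_norm_mul_apply_eq_of_apply_eq_zero (f : E →ₗ[ℝ] ℝ) {w : E} (hw : f w = 0) (x : E) :
    ‖w‖ ^ 2 * f x = f (o.rightAngleRotation w) * o.areaForm w x := by
  by_cases hw0 : w = 0
  · simp [hw0]
  have : ‖w‖ ^ 2 • f = f (o.rightAngleRotation w) • o.areaForm w := by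
    apply (o.basisRightAngleRotation w hw0).ext
    intro i
    fin_cases i
    · simp [hw]
    · simp [mul_comm]
  exact congr($this x)

theorem areaForm_mul_areaForm_nonneg_of_apply_nonpos {f : E →ₗ[ℝ] ℝ} (hf : f ≠ 0) {w x y : E}
    (hw : f w = 0) (hx : f x ≤ 0) (hy : f y ≤ 0) : 0 ≤ o.areaForm w x * o.areaForm w y := by
  by_cases hw0 : w = 0
  · simp [hw0]
  have hκ : f (o.rightAngleRotation w) ≠ 0 := by
    refine fun hκ => hf (LinearMap.ext fun z => ?_)
    have := o.sq_norm_mul_apply_eq_of_apply_eq_zero f hw z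
    rw [hκ, zero_mul] at this
    simpa [hw0] using this
  refine nonneg_of_mul_nonneg_right (a := f (o.rightAngleRotation w) ^ 2) ?_
    (sq_pos_of_ne_zero hκ)
  calc 0 ≤ (‖w‖ ^ 2 * f x) * (‖w‖ ^ 2 * f y) :=
        mul_nonneg_of_nonpos_of_nonpos (mul_nonpos_of_nonneg_of_nonpos (by positivity) hx)
          (mul_nonpos_of_nonneg_of_nonpos (by positivity) hy)
    _ = _ := by
        simp only [o.sq_norm_mul_apply_eq_of_apply_eq_zero f hw]
        ring

theorem inner_sub_sub_nonpos {u v w : E} (hu : ‖u‖ = ‖w‖) (hv : ‖v‖ = ‖w‖)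
    (huv : ⟪w, u⟫ ≤ ⟪w, v⟫) (hside : 0 ≤ o.areaForm w u * o.areaForm w v) :
    ⟪w - v, u - v⟫ ≤ 0 := by
  by_cases hw0 : w = 0
  · simp_all
  have hR : 0 < ‖w‖ ^ 2 := by positivity
  -- `⟪w, ·⟫` and `ω w ·` are orthogonal coordinates, scaled by `‖w‖`, in which `w = (‖w‖², 0)`.
  have hu' := o.inner_sq_add_areaForm_sq w u
  have hv' := o.inner_sq_add_areaForm_sq w v
  rw [hu, ← sq] at hu'
  rw [hv, ← sq] at hv'
  have key := add_mul_sub_le_mul_of_sq_add_sq_eq hR.le hu' hv' huv hside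
  have hexp := o.inner_mul_inner_add_areaForm_mul_areaForm w u v
  refine nonpos_of_mul_nonpos_right (a := ‖w‖ ^ 2) ?_ hR
  have hvv : ⟪v, v⟫ = ‖w‖ ^ 2 := by rw [real_inner_self_eq_norm_sq, hv]
  rw [inner_sub_left, inner_sub_right, inner_sub_right, hvv, real_inner_comm u v]
  linear_combination key + hexp

end Orientation

attribute [local instance] FiniteDimensional.of_fact_finrank_eq_two in
theorem dist_lt_of_apply_le_of_dist_eq {f : E →ₗ[ℝ] ℝ} (hf : f ≠ 0) {c p q q' : E}
    (hfp : f p = f c) (hq : f q ≤ f p) (hq' : f q' ≤ f p)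
    (hcq : dist q c = dist p c) (hcq' : dist q' c = dist p c) (hq'p : q' ≠ p)
    (hle : dist p q' ≤ dist p q) : dist q q' < dist p q := by
  let o : Orientation ℝ E (Fin 2) := (finBasisOfFinrankEq ℝ E Fact.out).orientation
  rw [dist_eq_norm, dist_eq_norm] at hcq hcq'
  have hside := o.areaForm_mul_areaForm_nonneg_of_apply_nonpos hf (w := p - c) (x := q - c)
    (y := q' - c) (by rw [map_sub, hfp, sub_self]) (by rw [map_sub]; linarith)
    (by rw [map_sub]; linarith)
  have hinner : ⟪p - c, q - c⟫ ≤ ⟪p - c, q' - c⟫ := by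
    refine inner_le_inner_of_norm_sub_le hcq hcq' ?_
    simpa only [sub_sub_sub_cancel_right, ← dist_eq_norm] using hle
  have hobtuse := o.inner_sub_sub_nonpos hcq hcq' hinner hside
  simp only [sub_sub_sub_cancel_right] at hobtuse
  simpa only [dist_eq_norm] using norm_sub_lt_of_inner_sub_sub_nonpos hobtuse hq'p

end InnerProductSpace

theorem SimpleGraph.Connected.of_adj_reachable {V : Type*} {G G' : SimpleGraph V}
    (hG : G.Connected) (h : ∀ ⦃x y⦄, G.Adj x y → G'.Reachable x y) : G'.Connected := by
  have := hG.nonempty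
  refine ⟨fun x y => ?_⟩
  obtain ⟨w⟩ := hG.preconnected x y
  induction w with
  | nil => rfl
  | cons hadj _ ih => exact (h hadj).trans ih

instance : Fact (finrank ℝ Pt = 2) := ⟨finrank_euclideanSpace_fin⟩

theorem edgeLen_nonneg (e : Sym2 Pt) : 0 ≤ edgeLen e := by
  induction e using Sym2.ind with
  | h x y => exact (dist_nonneg : 0 ≤ dist x y)

theorem weight_insert_erase_lt {E : Finset (Sym2 Pt)} {e e' : Sym2 Pt} (he : e ∈ E)
    (hlt : edgeLen e' < edgeLen e) : weight (insert e' (E.erase e)) < weight E := by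
  have hinsert : weight (insert e' (E.erase e)) ≤ edgeLen e' + weight (E.erase e) := by
    by_cases he' : e' ∈ E.erase e
    · rw [Finset.insert_eq_of_mem he']
      linarith [edgeLen_nonneg e']
    · rw [weight, Finset.sum_insert he', ← weight]
  have herase : weight (E.erase e) + edgeLen e = weight E := Finset.sum_erase_add E _ he
  linarith

theorem connected_induce_insert_erase {E : Finset (Sym2 Pt)} {S : Set Pt} {p q q' : Pt}
    (hp : p ∈ S) (hq : q ∈ S) (hq' : q' ∈ S) (hpq' : p ≠ q') (hqq' : q ≠ q')
    (he' : s(p, q') ∈ E) (hconn : ((graphOf E).induce S).Connected) :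
    ((graphOf (insert s(q, q') (E.erase s(p, q)))).induce S).Connected := by
  set G := (graphOf (insert s(q, q') (E.erase s(p, q)))).induce S
  have hpq : G.Reachable ⟨p, hp⟩ ⟨q, hq⟩ := by
    have hpq'G : G.Adj ⟨p, hp⟩ ⟨q', hq'⟩ :=
      ⟨hpq', Finset.mem_insert_of_mem
        (Finset.mem_erase.2 ⟨fun h => hqq' (Sym2.congr_right.1 h).symm, he'⟩)⟩
    have hq'qG : G.Adj ⟨q', hq'⟩ ⟨q, hq⟩ :=
      ⟨hqq'.symm, by rw [Sym2.eq_swap]; exact Finset.mem_insert_self _ _⟩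
    exact hpq'G.reachable.trans hq'qG.reachable
  refine hconn.of_adj_reachable ?_
  rintro ⟨x, hx⟩ ⟨y, hy⟩ ⟨hxy, hxyE⟩
  by_cases hxy_pq : s(x, y) = s(p, q)
  · rcases Sym2.eq_iff.1 hxy_pq with ⟨rfl, rfl⟩ | ⟨rfl, rfl⟩
    exacts [hpq, hpq.symm]
  · exact SimpleGraph.Adj.reachable
      ⟨hxy, Finset.mem_insert_of_mem (Finset.mem_erase.2 ⟨hxy_pq, hxyE⟩)⟩

theorem IsRBP.insert_erase {R B P : Finset Pt} {E : Finset (Sym2 Pt)} (hE : IsRBP R B P E)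
    {p q q' : Pt} (hp : p ∈ P) (hq : q ∈ P) (hq' : q' ∈ P) (hpq' : p ≠ q') (hqq' : q ≠ q')
    (he' : s(p, q') ∈ E) : IsRBP R B P (insert s(q, q') (E.erase s(p, q))) := by
  obtain ⟨hdiag, hends, hconnR, hconnB⟩ := hE
  refine ⟨?_, ?_, connected_induce_insert_erase (by simp [hp]) (by simp [hq]) (by simp [hq'])
    hpq' hqq' he' hconnR, connected_induce_insert_erase (by simp [hp]) (by simp [hq])
    (by simp [hq']) hpq' hqq' he' hconnB⟩
  · simp only [Finset.forall_mem_insert, Sym2.mk_isDiag_iff]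
    exact ⟨hqq', fun e he => hdiag e (Finset.mem_of_mem_erase he)⟩
  · simp only [Finset.forall_mem_insert, Sym2.mem_iff, forall_eq_or_imp, forall_eq]
    exact ⟨⟨by simp [hq], by simp [hq']⟩, fun e he => hends e (Finset.mem_of_mem_erase he)⟩

theorem IsMinRBP.dist_le_dist_of_purple_edges {R B P : Finset Pt} {E : Finset (Sym2 Pt)}
    (hE : IsMinRBP R B P E) {p q q' : Pt} (hp : p ∈ P) (hq : q ∈ P) (hq' : q' ∈ P)
    (hpq' : p ≠ q') (hqq' : q ≠ q') (he : s(p, q) ∈ E) (he' : s(p, q') ∈ E) :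
    dist p q ≤ dist q q' := by
  by_contra! hlt
  exact (hE.2 _ (hE.1.insert_erase hp hq hq' hpq' hqq' he')).not_gt
    (weight_insert_erase_lt he hlt)

theorem IsMinRBP.ncard_purple_adj_halfPlane_le_one {R B P : Finset Pt} {E : Finset (Sym2 Pt)}
    (hE : IsMinRBP R B P E) {ctr : Pt} {r : ℝ} (hcirc : ∀ q ∈ P, dist q ctr = r) {p : Pt}
    (hp : p ∈ P) {f : Pt →ₗ[ℝ] ℝ} (hf : f ≠ 0) (hfp : f p = f ctr) :
    ({q : Pt | q ∈ P ∧ q ≠ p ∧ s(p, q) ∈ E ∧ f q ≤ f p}).ncard ≤ 1 := by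
  rw [Set.ncard_le_one (P.finite_toSet.subset fun q hq => hq.1)]
  rintro q ⟨hqP, hqp, hqE, hfq⟩ q' ⟨hq'P, hq'p, hq'E, hfq'⟩
  by_contra hne
  wlog hle : dist p q' ≤ dist p q generalizing q q'
  · exact this q' hq'P hq'p hq'E hfq' q hqP hqp hqE hfq (Ne.symm hne) (le_of_not_ge hle)
  have hgeom := dist_lt_of_apply_le_of_dist_eq hf hfp hfq hfq'
    (by rw [hcirc q hqP, hcirc p hp]) (by rw [hcirc q' hq'P, hcirc p hp]) hq'p hle
  have hmin := hE.dist_le_dist_of_purple_edges hp hqP hq'P hq'p.symm hne hqE hq'E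
  linarith

theorem circle_minRBP_purple_neighbors_general (R B P : Finset Pt)
    (ctr : Pt) (r : ℝ)
    (hcirc : ∀ q ∈ R ∪ B ∪ P, dist q ctr = r)
    (E : Finset (Sym2 Pt)) (hE : IsMinRBP R B P E)
    (p : Pt) (hp : p ∈ P) :
    (∀ f : Pt →ₗ[ℝ] ℝ, f ≠ 0 → f p = f ctr →
      ({q : Pt | q ∈ P ∧ q ≠ p ∧ s(p, q) ∈ E ∧ f q ≤ f p}).ncard ≤ 1) ∧
    ({q : Pt | q ∈ P ∧ q ≠ p ∧ s(p, q) ∈ E}).ncard ≤ 2 := by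
  have hhalf (f : Pt →ₗ[ℝ] ℝ) (hf : f ≠ 0) (hfp : f p = f ctr) :=
    hE.ncard_purple_adj_halfPlane_le_one (fun q hq => hcirc q (Finset.mem_union_right _ hq))
      hp hf hfp
  refine ⟨fun f => hhalf f, ?_⟩
  obtain ⟨f, hf, hfw⟩ := exists_dual_ne_zero_apply_eq_zero (by simp : 1 < finrank ℝ Pt) (p - ctr)
  have hfp : f p = f ctr := sub_eq_zero.1 (by rwa [← map_sub])
  have hfin (g : Pt →ₗ[ℝ] ℝ) : {q : Pt | q ∈ P ∧ q ≠ p ∧ s(p, q) ∈ E ∧ g q ≤ g p}.Finite :=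
    P.finite_toSet.subset fun q hq => hq.1
  calc ({q : Pt | q ∈ P ∧ q ≠ p ∧ s(p, q) ∈ E}).ncard
      ≤ ({q : Pt | q ∈ P ∧ q ≠ p ∧ s(p, q) ∈ E ∧ f q ≤ f p} ∪
          {q : Pt | q ∈ P ∧ q ≠ p ∧ s(p, q) ∈ E ∧ (-f) q ≤ (-f) p}).ncard := by
        refine Set.ncard_le_ncard (fun q ⟨hqP, hqp, hqE⟩ => ?_) ((hfin f).union (hfin (-f)))
        rcases le_total (f q) (f p) with h | h
        exacts [Or.inl ⟨hqP, hqp, hqE, h⟩, Or.inr ⟨hqP, hqp, hqE, by simpa using h⟩]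
    _ ≤ 1 + 1 := (Set.ncard_union_le _ _).trans
        (add_le_add (hhalf f hf hfp) (hhalf (-f) (neg_ne_zero.2 hf) (by simp [hfp])))

/-- if all points lie on a circle with center `ctr`, `G` is a minimum
RBP spanning graph and `p` is purple, then for any closed half-plane `H` whose
boundary line passes through `p` and `ctr` (here `H = {q | f q ≤ f p}` for a
nonzero linear functional `f` with `f p = f ctr`), `p` has at most one purple
neighbor lying in `H`; consequently `p` has at most two purple neighbors. -/
theorem circle_minRBP_purple_neighbors (R B P : Finset Pt)
    (hRB : Disjoint R B) (hRP : Disjoint R P) (hBP : Disjoint B P)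
    (ctr : Pt) (r : ℝ) (hr : 0 < r)
    (hcirc : ∀ q ∈ R ∪ B ∪ P, dist q ctr = r)
    (E : Finset (Sym2 Pt)) (hE : IsMinRBP R B P E)
    (p : Pt) (hp : p ∈ P) :
    (∀ f : Pt →ₗ[ℝ] ℝ, f ≠ 0 → f p = f ctr →
      ({q : Pt | q ∈ P ∧ q ≠ p ∧ s(p, q) ∈ E ∧ f q ≤ f p}).ncard ≤ 1) ∧
    ({q : Pt | q ∈ P ∧ q ≠ p ∧ s(p, q) ∈ E}).ncard ≤ 2 :=
  circle_minRBP_purple_neighbors_general R B P ctr r hcirc E hE p hp
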